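/- arXiv:1104.0287 — 2 statements merged into one kernel-verified Lean document; each statement's English description precedes it below -/
import Mathlib

section
/- If R is a continuous and open n-to-m correspondence between topological spaces X and Y (i.e., every fiber R⁻¹({y}) has at most n points and every R({x}) has at most m points), then X and Y have the same Cantor-Bendixson rank. -/
open Set

/-- The Cantor derivative of a subset `A` of a space, relative to the subspace topology:
points of `A` that do not lie in a finite relatively-open subset of `A`. -/
def sderiv {X : Type*} [TopologicalSpace X] (A : Set X) : Set X :=
  {x | x ∈ A ∧ ∀ U : Set X, IsOpen U → x ∈ U → (U ∩ A).Infinite}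

/-- Iterated Cantor derivative of a subset. `cbIter A α` is `A^α`. -/
noncomputable def cbIter {X : Type*} [TopologicalSpace X] (A : Set X) (o : Ordinal) : Set X :=
  Ordinal.limitRecOn o A (fun _ ih => sderiv ih)
    (fun o _ ih => ⋂ (β : Ordinal), ⋂ (h : β < o), ih β h)

/-- `ρ` is the Cantor-Bendixson rank of `X`. -/
def IsCBRank (X : Type*) [TopologicalSpace X] (ρ : Ordinal) : Prop :=
  cbIter (Set.univ : Set X) ρ = ∅ ∧ ∀ β < ρ, cbIter (Set.univ : Set X) β ≠ ∅

/-!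
Related points enter the iterated Cantor derivatives at the same stage. If `R x y` and `x` is a
limit point of `A`, every open `V ∋ y` has an open preimage `U ∋ x`, and `U ∩ A` is covered by the
finite fibres over `V ∩ B`, so `V ∩ B` is infinite. The other direction is the same argument for
the converse relation, which is continuous because `R` is open, and limit stages are intersections.
As both projections are surjective, the derivatives of `X` and `Y` vanish at the same ordinals.
-/

theorem nonempty_iff_of_rel {X Y : Type*} (R : X → Y → Prop) (hsurjX : ∀ x, ∃ y, R x y)
    (hsurjY : ∀ y, ∃ x, R x y) {S : Set X} {T : Set Y} (hST : ∀ x y, R x y → (x ∈ S ↔ y ∈ T)) :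
    S.Nonempty ↔ T.Nonempty := by
  constructor
  · rintro ⟨x, hx⟩
    obtain ⟨y, hxy⟩ := hsurjX x
    exact ⟨y, (hST x y hxy).1 hx⟩
  · rintro ⟨y, hy⟩
    obtain ⟨x, hxy⟩ := hsurjY y
    exact ⟨x, (hST x y hxy).2 hy⟩

universe u

section

variable {X Y : Type*} [TopologicalSpace X] [TopologicalSpace Y]

theorem cbIter_zero (A : Set X) : cbIter A 0 = A :=
  Ordinal.limitRecOn_zero _ _ _

theorem cbIter_add_one (A : Set X) (o : Ordinal) : cbIter A (o + 1) = sderiv (cbIter A o) :=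
  Ordinal.limitRecOn_add_one _ _ _ _

theorem cbIter_limit (A : Set X) {o : Ordinal} (ho : Order.IsSuccLimit o) :
    cbIter A o = ⋂ β < o, cbIter A β :=
  Ordinal.limitRecOn_limit _ _ _ _ ho

theorem mem_sderiv_of_rel (R : X → Y → Prop)
    (hcont : ∀ O : Set Y, IsOpen O → IsOpen {x | ∃ y ∈ O, R x y})
    (hfin : ∀ y, {x | R x y}.Finite) {A : Set X} {B : Set Y}
    (hAB : ∀ x y, R x y → x ∈ A → y ∈ B) {x : X} {y : Y} (hxy : R x y) (hx : x ∈ sderiv A) :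
    y ∈ sderiv B := by
  refine ⟨hAB x y hxy hx.1, fun V hV hyV hVB => ?_⟩
  have hcover : {x' | ∃ y' ∈ V, R x' y'} ∩ A ⊆ ⋃ y' ∈ V ∩ B, {x' | R x' y'} := by
    rintro x' ⟨⟨y', hy'V, hx'y'⟩, hx'A⟩
    exact mem_biUnion ⟨hy'V, hAB x' y' hx'y' hx'A⟩ hx'y'
  exact hx.2 _ (hcont V hV) ⟨y, hyV, hxy⟩ ((hVB.biUnion fun y' _ => hfin y').subset hcover)

theorem mem_cbIter_iff_of_rel (R : X → Y → Prop)
    (hcont : ∀ O : Set Y, IsOpen O → IsOpen {x | ∃ y ∈ O, R x y})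
    (hopen : ∀ O : Set X, IsOpen O → IsOpen {y | ∃ x ∈ O, R x y})
    (hfibY : ∀ y, {x | R x y}.Finite) (hfibX : ∀ x, {y | R x y}.Finite)
    {A : Set X} {B : Set Y} (hAB : ∀ x y, R x y → (x ∈ A ↔ y ∈ B)) (o : Ordinal) :
    ∀ x y, R x y → (x ∈ cbIter A o ↔ y ∈ cbIter B o) := by
  induction o using Ordinal.limitRecOn with
  | zero => simpa only [cbIter_zero] using hAB
  | add_one o ih =>
    intro x y hxy
    rw [cbIter_add_one, cbIter_add_one]
    exact ⟨mem_sderiv_of_rel R hcont hfibY (fun x y h => (ih x y h).1) hxy,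
      mem_sderiv_of_rel (flip R) hopen hfibX (fun y x h => (ih x y h).2) hxy⟩
  | limit o ho ih =>
    intro x y hxy
    simp only [cbIter_limit _ ho, mem_iInter]
    exact forall₂_congr fun β hβ => ih β hβ x y hxy

theorem isCBRank_iff_of_cbIter_univ_eq_empty_iff
    (h : ∀ o : Ordinal.{u}, cbIter (univ : Set X) o = ∅ ↔ cbIter (univ : Set Y) o = ∅)
    (ρ : Ordinal.{u}) :
    IsCBRank X ρ ↔ IsCBRank Y ρ := by
  simp only [IsCBRank, ne_eq, h]

end

theorem continuous_open_finite_correspondence_CB_eq_general {X Y : Type*} [TopologicalSpace X]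
    [TopologicalSpace Y] (R : X → Y → Prop) (n m : ℕ)
    (hsurjX : ∀ x, ∃ y, R x y) (hsurjY : ∀ y, ∃ x, R x y)
    (hcont : ∀ O : Set Y, IsOpen O → IsOpen {x | ∃ y ∈ O, R x y})
    (hopen : ∀ O : Set X, IsOpen O → IsOpen {y | ∃ x ∈ O, R x y})
    (hfibY : ∀ y, {x | R x y}.Finite ∧ ({x | R x y}).ncard ≤ n)
    (hfibX : ∀ x, {y | R x y}.Finite ∧ ({y | R x y}).ncard ≤ m) :
    ∀ ρ : Ordinal, (IsCBRank X ρ ↔ IsCBRank Y ρ) := by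
  intro ρ
  refine isCBRank_iff_of_cbIter_univ_eq_empty_iff (fun o => ?_) ρ
  have hiter := mem_cbIter_iff_of_rel R hcont hopen (fun y => (hfibY y).1)
    (fun x => (hfibX x).1) (A := univ) (B := univ) (fun _ _ _ => Iff.rfl) o
  simpa only [not_nonempty_iff_eq_empty, not_iff_not] using
    (nonempty_iff_of_rel R hsurjX hsurjY hiter).not

/-- A continuous open n-to-m correspondence preserves the Cantor-Bendixson rank:
`X` and `Y` have the same Cantor-Bendixson rank. -/
theorem continuous_open_finite_correspondence_CB_eq {X Y : Type*} [TopologicalSpace X]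
    [TopologicalSpace Y] (R : X → Y → Prop) (n m : ℕ) (hn : 0 < n) (hm : 0 < m)
    (hsurjX : ∀ x, ∃ y, R x y) (hsurjY : ∀ y, ∃ x, R x y)
    (hcont : ∀ O : Set Y, IsOpen O → IsOpen {x | ∃ y ∈ O, R x y})
    (hopen : ∀ O : Set X, IsOpen O → IsOpen {y | ∃ x ∈ O, R x y})
    (hfibY : ∀ y, {x | R x y}.Finite ∧ ({x | R x y}).ncard ≤ n)
    (hfibX : ∀ x, {y | R x y}.Finite ∧ ({y | R x y}).ncard ≤ m) :
    ∀ ρ : Ordinal, (IsCBRank X ρ ↔ IsCBRank Y ρ) :=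
  continuous_open_finite_correspondence_CB_eq_general R n m hsurjX hsurjY hcont hopen hfibY hfibX
end

section
/- Every countable compact Hausdorff space is homeomorphic to some well-ordered set (an ordinal) equipped with its order topology. -/
/-!
Call a point good if all clopen subsets of some neighbourhood of it are homeomorphic to ordinals.
The good points form an open set. If the closed set of bad points were nonempty, Baire's theorem
would give it an isolated point `p`, with a neighbourhood `U` in which all other points are good.
For a clopen `V ⊆ U` containing `p`, the open set `V \ {p}` is then a disjoint union of countably
many clopen pieces homeomorphic to ordinals `γ₀, γ₁, …`, and sending `p` to the supremum `L` of
the partial sums `γ₀ + ⋯ + γₙ` makes `V` homeomorphic to `L + 1`; so `p` is good after all. The same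
gluing, around any point of `X`, shows that `X` itself is homeomorphic to an ordinal.
-/

open Set Topology Filter Function TopologicalSpace

theorem Ordinal.bijOn_add_left_Iio (a b : Ordinal) : BijOn (a + ·) (Iio b) (Ico a (a + b)) :=
  ⟨fun _ hx => ⟨le_self_add, add_lt_add_right hx a⟩, fun _ _ _ _ h => add_left_cancel h,
    fun c hc => ⟨c - a, by
      rw [mem_Iio, ← add_lt_add_iff_left a, Ordinal.add_sub_cancel_of_le hc.1]; exact hc.2,
      Ordinal.add_sub_cancel_of_le hc.1⟩⟩

section Topology

variable {X : Type*} [TopologicalSpace X]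

theorem exists_isOpen_singleton_of_countable [BaireSpace X] [T1Space X] [Countable X]
    [Nonempty X] : ∃ x : X, IsOpen ({x} : Set X) := by
  obtain ⟨x, hx⟩ := nonempty_interior_of_iUnion_of_closed (fun x : X => isClosed_singleton)
    (iUnion_of_singleton X)
  exact ⟨x, interior_eq_iff_isOpen.1 (hx.subset_singleton_iff.1 interior_subset)⟩

theorem IsClosed.exists_inter_eq_singleton_of_countable [CompactSpace X] [T2Space X]
    [Countable X] {B : Set X} (hB : IsClosed B) (hne : B.Nonempty) :
    ∃ p ∈ B, ∃ U, IsOpen U ∧ U ∩ B = {p} := by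
  have : CompactSpace B := isCompact_iff_compactSpace.1 hB.isCompact
  have : Nonempty B := hne.to_subtype
  obtain ⟨⟨p, hp⟩, hopen⟩ := exists_isOpen_singleton_of_countable (X := B)
  obtain ⟨U, hU, hUp⟩ := isOpen_induced_iff.1 hopen
  refine ⟨p, hp, U, hU, ?_⟩
  simpa only [image_preimage_eq_inter_range, Subtype.range_coe, image_singleton] using
    congrArg (Subtype.val '' ·) hUp

theorem exists_isClopen_partition_of_forall_nhds [Countable X]
    (hB : IsTopologicalBasis {s : Set X | IsClopen s}) {P : Set X → Prop} (h₀ : P ∅)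
    {O : Set X} (hO : IsOpen O) (hP : ∀ x ∈ O, ∃ U ∈ 𝓝 x, ∀ V ⊆ U, IsClopen V → P V) :
    ∃ C : ℕ → Set X, (∀ n, IsClopen (C n)) ∧ Pairwise (Disjoint on C) ∧ (∀ n, P (C n)) ∧
      ⋃ n, C n = O := by
  rcases O.eq_empty_or_nonempty with rfl | hne
  · exact ⟨fun _ => ∅, fun _ => isClopen_empty, fun _ _ _ => disjoint_bot_left, fun _ => h₀,
      iUnion_empty⟩
  have hV : ∀ x ∈ O, ∃ V, IsClopen V ∧ x ∈ V ∧ V ⊆ O ∧ ∀ W ⊆ V, IsClopen W → P W := by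
    intro x hx
    obtain ⟨U, hU, hUP⟩ := hP x hx
    obtain ⟨V, hV, hxV, hVUO⟩ := hB.mem_nhds_iff.1 (inter_mem hU (hO.mem_nhds hx))
    exact ⟨V, hV, hxV, hVUO.trans inter_subset_right,
      fun W hWV => hUP W (hWV.trans (hVUO.trans inter_subset_left))⟩
  choose! V hVc hxV hVO hVP using hV
  obtain ⟨e, rfl⟩ := O.to_countable.exists_eq_range hne
  have hVe : ∀ n, IsClopen (V (e n)) := fun n => hVc _ (mem_range_self n)
  have hCc : ∀ n, IsClopen (disjointed (V ∘ e) n) := fun n =>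
    disjointedRec (fun _ m ht => ht.diff (hVe m)) (hVe n)
  refine ⟨disjointed (V ∘ e), hCc, disjoint_disjointed _,
    fun n => hVP _ (mem_range_self n) _ (disjointed_subset _ n) (hCc n), ?_⟩
  rw [iUnion_disjointed]
  exact Subset.antisymm (iUnion_subset fun n => hVO _ (mem_range_self n))
    (range_subset_iff.2 fun n => mem_iUnion.2 ⟨n, hxV _ (mem_range_self n)⟩)

end Topology

namespace MazurkiewiczSierpinski

/-- Ordinal addition is not commutative, so this is not a `Finset.sum`. -/
def partialSums (γ : ℕ → Ordinal.{0}) : ℕ → Ordinal.{0}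
  | 0 => 0
  | n + 1 => partialSums γ n + γ n

theorem monotone_partialSums (γ : ℕ → Ordinal.{0}) : Monotone (partialSums γ) :=
  monotone_nat_of_le_succ fun _ => le_self_add

theorem iUnion_Ico_partialSums (γ : ℕ → Ordinal.{0}) :
    ⋃ n, Ico (partialSums γ n) (partialSums γ (n + 1)) = Iio (⨆ n, partialSums γ n) := by
  refine Subset.antisymm (iUnion_subset fun n c hc => hc.2.trans_le (Ordinal.le_iSup _ _))
    fun c hc => ?_
  obtain ⟨N, hN⟩ := Ordinal.lt_iSup_iff.1 hc
  obtain ⟨n, -, hn⟩ := mem_iUnion₂.1 (Ico_subset_biUnion_Ico N (partialSums γ) ⟨zero_le, hN⟩)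
  exact mem_iUnion.2 ⟨n, hn⟩

theorem bijOn_insert_iUnion {X : Type*} {g : X → Ordinal.{0}} {C : ℕ → Set X}
    {γ : ℕ → Ordinal.{0}} {p : X}
    (hblock : ∀ n, BijOn g (C n) (Ico (partialSums γ n) (partialSums γ (n + 1))))
    (hgp : g p = ⨆ n, partialSums γ n) :
    BijOn g (insert p (⋃ n, C n)) (Iio ((⨆ n, partialSums γ n) + 1)) := by
  have hunion : BijOn g (⋃ n, C n) (Iio (⨆ n, partialSums γ n)) := by
    rw [← iUnion_Ico_partialSums]
    refine bijOn_iUnion hblock fun x hx y hy hxy => ?_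
    obtain ⟨m, hm⟩ := mem_iUnion.1 hx
    obtain ⟨n, hn⟩ := mem_iUnion.1 hy
    obtain rfl : m = n := (monotone_partialSums γ).pairwise_disjoint_on_Ico_succ.eq
      (not_disjoint_iff.2 ⟨g x, (hblock m).mapsTo hm, hxy ▸ (hblock n).mapsTo hn⟩)
    exact (hblock m).injOn hm hn hxy
  have h := hunion.insert (a := p) (by rw [mem_Iio, hgp]; exact lt_irrefl _)
  rwa [hgp, Iio_insert, ← Iio_add_one_eq_Iic] at h

variable {X : Type*} [TopologicalSpace X]

theorem continuousWithinAt_insert_iUnion {g : X → Ordinal.{0}} {C : ℕ → Set X}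
    {γ : ℕ → Ordinal.{0}} {p : X} (hC : ∀ n, IsClosed (C n)) (hp : ∀ n, p ∉ C n)
    (hblock : ∀ n, MapsTo g (C n) (Ici (partialSums γ n)))
    (hle : MapsTo g (insert p (⋃ n, C n)) (Iic (⨆ n, partialSums γ n)))
    (hgp : g p = ⨆ n, partialSums γ n) :
    ContinuousWithinAt g (insert p (⋃ n, C n)) p := by
  rw [ContinuousWithinAt, hgp, tendsto_order]
  refine ⟨fun c hc => ?_, fun c hc => ?_⟩
  · obtain ⟨n, hn⟩ := Ordinal.lt_iSup_iff.1 hc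
    have hfar : (⋃ m < n, C m)ᶜ ∈ 𝓝 p :=
      ((finite_lt_nat n).isClosed_biUnion fun m _ => hC m).isOpen_compl.mem_nhds
        (by simpa using fun m _ => hp m)
    filter_upwards [self_mem_nhdsWithin, mem_nhdsWithin_of_mem_nhds hfar] with y hyK hyfar
    rcases hyK with rfl | hy
    · exact hgp ▸ hn.trans_le (Ordinal.le_iSup _ n)
    · obtain ⟨m, hm⟩ := mem_iUnion.1 hy
      have hnm : n ≤ m := not_lt.1 fun hmn => hyfar (mem_biUnion hmn hm)
      exact hn.trans_le ((monotone_partialSums γ hnm).trans (hblock m hm))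
  · filter_upwards [self_mem_nhdsWithin] with y hy
    exact (hle hy).trans_lt hc

/-- A homeomorphism `s ≃ₜ Iio α` encoded by a function on the whole space, which is what makes
pieces easy to glue; for compact `s` a continuous bijection onto `Iio α` is a homeomorphism. -/
def IsOrdinalLike (s : Set X) : Prop :=
  ∃ (α : Ordinal.{0}) (g : X → Ordinal.{0}), ContinuousOn g s ∧ BijOn g s (Iio α)

theorem isOrdinalLike_empty : IsOrdinalLike (∅ : Set X) :=
  ⟨0, fun _ => 0, continuousOn_empty _, by simp⟩

theorem IsOrdinalLike.exists_homeomorph [CompactSpace X] (h : IsOrdinalLike (univ : Set X)) :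
    ∃ α : Ordinal.{0}, Nonempty (X ≃ₜ Iio α) := by
  obtain ⟨α, g, hg, hbij⟩ := h
  have hcont : Continuous ((Equiv.Set.univ X).symm.trans (hbij.equiv g)) :=
    (continuousOn_univ.1 hg).subtype_mk _
  exact ⟨α, ⟨hcont.homeoOfEquivCompactToT2⟩⟩

theorem IsOrdinalLike.insert_iUnion {p : X} {C : ℕ → Set X} (hC : ∀ n, IsClopen (C n))
    (hdisj : Pairwise (Disjoint on C)) (hp : ∀ n, p ∉ C n) (h : ∀ n, IsOrdinalLike (C n)) :
    IsOrdinalLike (insert p (⋃ n, C n)) := by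
  classical
  choose γ G hGc hGb using h
  set s := partialSums γ
  let g : X → Ordinal.{0} := fun x =>
    if hx : ∃ n, x ∈ C n then s hx.choose + G hx.choose x else ⨆ n, s n
  have hg : ∀ n, ∀ x ∈ C n, g x = s n + G n x := by
    intro n x hx
    have hex : ∃ n, x ∈ C n := ⟨n, hx⟩
    obtain rfl : hex.choose = n := hdisj.eq (not_disjoint_iff.2 ⟨x, hex.choose_spec, hx⟩)
    exact dif_pos hex
  have hgp : g p = ⨆ n, s n := dif_neg fun ⟨n, hn⟩ => hp n hn
  have hblock : ∀ n, BijOn g (C n) (Ico (s n) (s (n + 1))) := fun n =>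
    ((Ordinal.bijOn_add_left_Iio (s n) (γ n)).comp (hGb n)).congr fun x hx => (hg n x hx).symm
  have hbij := bijOn_insert_iUnion hblock hgp
  refine ⟨_, g, ?_, hbij⟩
  rintro x (rfl | hx)
  · exact continuousWithinAt_insert_iUnion (fun n => (hC n).isClosed) hp
      (fun n _ hx => ((hblock n).mapsTo hx).1)
      (fun _ hy => mem_Iic.2 (Order.lt_add_one_iff.1 (hbij.mapsTo hy))) hgp
  · obtain ⟨n, hn⟩ := mem_iUnion.1 hx
    have hcont : ContinuousAt (fun y => s n + G n y) x :=
      ((Ordinal.isNormal_add_right (s n)).continuous.comp_continuousOn (hGc n)).continuousAt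
        ((hC n).isOpen.mem_nhds hn)
    refine (hcont.congr ?_).continuousWithinAt
    filter_upwards [(hC n).isOpen.mem_nhds hn] with y hy using (hg n y hy).symm

def OrdinalLikeNear (x : X) : Prop :=
  ∃ U ∈ 𝓝 x, ∀ V ⊆ U, IsClopen V → IsOrdinalLike V

theorem isOpen_setOf_ordinalLikeNear : IsOpen {x : X | OrdinalLikeNear x} :=
  isOpen_iff_mem_nhds.2 fun _ ⟨U, hU, hUV⟩ => by
    filter_upwards [eventually_mem_nhds_iff.2 hU] with y hy using ⟨U, hy, hUV⟩

section CompactCountable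

variable [CompactSpace X] [T2Space X] [Countable X]

theorem isOrdinalLike_of_isClopen {K : Set X} (hK : IsClopen K)
    (hbad : {x ∈ K | ¬OrdinalLikeNear x}.Subsingleton) : IsOrdinalLike K := by
  rcases K.eq_empty_or_nonempty with rfl | ⟨q, hq⟩
  · exact isOrdinalLike_empty
  obtain ⟨p, hpK, hp⟩ : ∃ p ∈ K, ∀ x ∈ K \ {p}, OrdinalLikeNear x := by
    by_cases h : ∃ p ∈ K, ¬OrdinalLikeNear p
    · obtain ⟨p, hpK, hp⟩ := h
      exact ⟨p, hpK, fun x hx => by_contra fun hx' => hx.2 (hbad ⟨hx.1, hx'⟩ ⟨hpK, hp⟩)⟩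
    · push Not at h
      exact ⟨q, hq, fun x hx => h x hx.1⟩
  obtain ⟨C, hCc, hCd, hCo, hCU⟩ := exists_isClopen_partition_of_forall_nhds
    isTopologicalBasis_isClopen isOrdinalLike_empty (hK.isOpen.sdiff isClosed_singleton) hp
  have hKC : K = insert p (⋃ n, C n) := by
    rw [hCU, insert_sdiff_singleton, insert_eq_of_mem hpK]
  rw [hKC]
  exact .insert_iUnion hCc hCd (fun n hn => (hCU ▸ mem_iUnion_of_mem n hn).2 rfl) hCo

theorem ordinalLikeNear (x : X) : OrdinalLikeNear x := by
  by_contra hx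
  obtain ⟨p, hp, U, hU, hUB⟩ :=
    isOpen_setOf_ordinalLikeNear.isClosed_compl.exists_inter_eq_singleton_of_countable ⟨x, hx⟩
  have hpU : p ∈ U := (hUB.ge (mem_singleton p)).1
  have hbad : (U ∩ {x | OrdinalLikeNear x}ᶜ).Subsingleton := hUB ▸ subsingleton_singleton
  exact hp ⟨U, hU.mem_nhds hpU, fun V hVU hV =>
    isOrdinalLike_of_isClopen hV (hbad.anti fun y hy => ⟨hVU hy.1, hy.2⟩)⟩

end CompactCountable

end MazurkiewiczSierpinski

open MazurkiewiczSierpinski in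
/-- Mazurkiewicz–Sierpiński: every countable compact Hausdorff space is homeomorphic to
some ordinal (i.e. the set of ordinals below it) with the order topology. -/
theorem countable_compact_T2_homeomorph_ordinal (X : Type*) [TopologicalSpace X]
    [CompactSpace X] [T2Space X] [Countable X] :
    ∃ α : Ordinal.{0}, Nonempty (X ≃ₜ (Set.Iio α)) :=
  (isOrdinalLike_of_isClopen isClopen_univ (by simp [ordinalLikeNear])).exists_homeomorph
end
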